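/- arXiv:1110.5140 — 4 statements merged into one kernel-verified Lean document; each statement's English description precedes it below -/
import Mathlib

section
/- Let H be a hypergraph in which every hyperedge contains at least k vertices and each hyperedge intersects at most d other hyperedges. If e(d + 2) ≤ 2^k (where e is Euler's number), then H is 2-colorable, i.e., the vertices can be colored with 2 colors so that no hyperedge is monochromatic. -/
open SimpleGraph Finset

/-- A proper coloring of a graph. -/
def ProperColoring {V α : Type*} (G : SimpleGraph V) (c : V → α) : Prop :=
  ∀ ⦃u v⦄, G.Adj u v → c u ≠ c v

/-- The chromatic number, as a natural number. -/
noncomputable def chi {V : Type*} (G : SimpleGraph V) : ℕ := sInf {n | G.Colorable n}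

/-- A dynamic coloring: proper, and every vertex of degree at least 2 sees
at least two distinct colors in its neighborhood. -/
def DynColoring {V α : Type*} (G : SimpleGraph V) [Fintype V] [DecidableRel G.Adj]
    (c : V → α) : Prop :=
  ProperColoring G c ∧ ∀ v, 2 ≤ G.degree v → ∃ u w, G.Adj v u ∧ G.Adj v w ∧ c u ≠ c w

/-- The dynamic chromatic number. -/
noncomputable def dynChi {V : Type*} (G : SimpleGraph V) [Fintype V] [DecidableRel G.Adj] : ℕ :=
  sInf {n | ∃ c : V → Fin n, DynColoring G c}

/-- The independence number. -/
noncomputable def alpha {V : Type*} (G : SimpleGraph V) : ℕ :=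
  sSup {n | ∃ s : Finset V, (∀ u ∈ s, ∀ v ∈ s, ¬ G.Adj u v) ∧ s.card = n}

/-- The square of a graph: distinct vertices adjacent iff at distance at most 2. -/
def graphSq {V : Type*} (G : SimpleGraph V) : SimpleGraph V where
  Adj u v := u ≠ v ∧ (G.Adj u v ∨ ∃ w, G.Adj u w ∧ G.Adj w v)
  symm := by
    constructor
    rintro u v ⟨h1, h2⟩
    refine ⟨h1.symm, ?_⟩
    rcases h2 with h | ⟨w, hw1, hw2⟩
    · exact .inl h.symm
    · exact .inr ⟨w, hw2.symm, hw1.symm⟩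
  loopless := by constructor; rintro u ⟨h, _⟩; exact h rfl

/-!
Counting form of the lopsided Lovász local lemma on the `2 ^ |W|` colourings of `W = ⋃ E`, with
bad events "`e` is monochromatic of colour `b`", each of probability at most `2⁻ᵏ`. The event
`(e, b)` conflicts only with the events `(f, !b)` for `f` meeting `e`, at most `d + 1` of them.
Avoiding any family of non-conflicting events makes `(e, b)` no more likely: recolouring an
arbitrary part `t ⊆ e` of a colouring `s` in which `e` has colour `b` keeps every such event
avoided, so `(s, t) ↦ s ∆ t` is an injection. Finally `x = 1 / (d + 2)` satisfies
`2⁻ᵏ ≤ x (1 - x) ^ (d + 1)` because `(1 + 1 / (d + 1)) ^ (d + 1) ≤ e`.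
-/

open scoped symmDiff

section CountingLocalLemma

variable {α ι : Type*} (Ω : Finset α) (P : ι → α → Prop) [∀ i, DecidablePred (P i)]

def avoiding (S : Finset ι) : Finset α :=
  Ω.filter fun ω => ∀ i ∈ S, ¬ P i ω

variable {Ω P}

@[simp]
lemma mem_avoiding {S : Finset ι} {ω : α} : ω ∈ avoiding Ω P S ↔ ω ∈ Ω ∧ ∀ i ∈ S, ¬ P i ω :=
  mem_filter

@[simp]
lemma avoiding_empty : avoiding Ω P ∅ = Ω := by
  simp [avoiding]

lemma avoiding_insert [DecidableEq ι] (j : ι) (S : Finset ι) :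
    avoiding Ω P (insert j S) = (avoiding Ω P S).filter (¬ P j ·) := by
  ext ω
  simp only [mem_avoiding, mem_filter, forall_mem_insert]
  tauto

lemma avoiding_anti {S T : Finset ι} (h : S ⊆ T) : avoiding Ω P T ⊆ avoiding Ω P S :=
  fun _ hω => mem_avoiding.2 ⟨(mem_avoiding.1 hω).1, fun i hi => (mem_avoiding.1 hω).2 i (h hi)⟩

lemma one_sub_mul_card_avoiding_le [DecidableEq ι] {x : ℝ} {j : ι} {S : Finset ι}
    (h : (#((avoiding Ω P S).filter (P j)) : ℝ) ≤ x * #(avoiding Ω P S)) :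
    (1 - x) * #(avoiding Ω P S) ≤ #(avoiding Ω P (insert j S)) := by
  have hsplit := card_filter_add_card_filter_not (s := avoiding Ω P S) (P j)
  rw [avoiding_insert]
  rify at hsplit
  linarith

lemma one_sub_pow_mul_card_avoiding_le [DecidableEq ι] {x : ℝ} (hx : x ≤ 1) (S T : Finset ι)
    (h : ∀ j ∈ T, ∀ R ⊆ T, j ∉ R →
      (#((avoiding Ω P (S ∪ R)).filter (P j)) : ℝ) ≤ x * #(avoiding Ω P (S ∪ R))) :
    (1 - x) ^ #T * #(avoiding Ω P S) ≤ #(avoiding Ω P (S ∪ T)) := by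
  induction T using Finset.induction_on with
  | empty => simp
  | @insert j T hj ih =>
    have ih' := ih fun i hi R hR hiR =>
      h i (mem_insert_of_mem hi) R (hR.trans (subset_insert _ _)) hiR
    have hstep :=
      one_sub_mul_card_avoiding_le (h j (mem_insert_self _ _) T (subset_insert _ _) hj)
    rw [card_insert_of_notMem hj, pow_succ, union_insert]
    calc (1 - x) ^ #T * (1 - x) * #(avoiding Ω P S)
        = (1 - x) * ((1 - x) ^ #T * #(avoiding Ω P S)) := by ring
      _ ≤ (1 - x) * #(avoiding Ω P (S ∪ T)) := by gcongr
      _ ≤ _ := hstep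

theorem card_filter_avoiding_le [DecidableEq ι] {I : Finset ι} {Γ : ι → Finset ι} {D : ℕ}
    {p x : ℝ}
    (hx₀ : 0 ≤ x) (hx₁ : x ≤ 1) (hΓ : ∀ i ∈ I, #(Γ i) ≤ D) (hp : p ≤ x * (1 - x) ^ D)
    (hP : ∀ i ∈ I, ∀ S ⊆ I, Disjoint S (Γ i) →
      (#((avoiding Ω P S).filter (P i)) : ℝ) ≤ p * #(avoiding Ω P S))
    {S : Finset ι} (hS : S ⊆ I) {i : ι} (hi : i ∈ I) :
    (#((avoiding Ω P S).filter (P i)) : ℝ) ≤ x * #(avoiding Ω P S) := by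
  induction S using Finset.strongInduction generalizing i with
  | _ S ih =>
  set near := S.filter (· ∈ Γ i)
  set far := S.filter (· ∉ Γ i)
  have hfar : far ⊆ S := filter_subset _ _
  have hsplit : far ∪ near = S := by rw [union_comm]; exact filter_union_filter_not_eq _ _
  have h_mono : #((avoiding Ω P S).filter (P i)) ≤ #((avoiding Ω P far).filter (P i)) :=
    card_le_card (filter_subset_filter _ (avoiding_anti hfar))
  have h_lop := hP i hi far (hfar.trans hS) (disjoint_left.2 fun j hj => (mem_filter.1 hj).2)
  have h_peel : (1 - x) ^ #near * #(avoiding Ω P far) ≤ #(avoiding Ω P S) := by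
    refine hsplit ▸ one_sub_pow_mul_card_avoiding_le hx₁ far near fun j hj R hR hjR => ?_
    have hsub : far ∪ R ⊆ S := union_subset hfar (hR.trans (filter_subset _ _))
    have hjS : j ∈ S := (mem_filter.1 hj).1
    refine ih _ ((ssubset_iff_of_subset hsub).2 ⟨j, hjS, ?_⟩) (hsub.trans hS) (hS hjS)
    simp only [mem_union, mem_filter, not_or, far]
    exact ⟨fun h => h.2 (mem_filter.1 hj).2, hjR⟩
  have h_near : (1 - x) ^ D ≤ (1 - x) ^ #near :=
    pow_le_pow_of_le_one (by linarith) (by linarith)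
      ((card_le_card fun j hj => (mem_filter.1 hj).2).trans (hΓ i hi))
  calc (#((avoiding Ω P S).filter (P i)) : ℝ)
      ≤ #((avoiding Ω P far).filter (P i)) := by exact_mod_cast h_mono
    _ ≤ p * #(avoiding Ω P far) := h_lop
    _ ≤ x * ((1 - x) ^ #near * #(avoiding Ω P far)) := by
        rw [← mul_assoc]; gcongr; exact hp.trans (by gcongr)
    _ ≤ x * #(avoiding Ω P S) := by gcongr

theorem one_sub_pow_mul_card_le_card_avoiding [DecidableEq ι] {I : Finset ι}
    {Γ : ι → Finset ι} {D : ℕ} {p x : ℝ} (hx₀ : 0 ≤ x) (hx₁ : x ≤ 1) (hΓ : ∀ i ∈ I, #(Γ i) ≤ D)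
    (hp : p ≤ x * (1 - x) ^ D)
    (hP : ∀ i ∈ I, ∀ S ⊆ I, Disjoint S (Γ i) →
      (#((avoiding Ω P S).filter (P i)) : ℝ) ≤ p * #(avoiding Ω P S)) :
    (1 - x) ^ #I * #Ω ≤ #(avoiding Ω P I) := by
  simpa using one_sub_pow_mul_card_avoiding_le hx₁ ∅ I fun j hj R hR _ =>
    card_filter_avoiding_le hx₀ hx₁ hΓ hp hP (by simpa using hR) hj

end CountingLocalLemma

lemma inv_two_pow_le_inv_mul_one_sub_pow {d k : ℕ} (he : Real.exp 1 * ((d : ℝ) + 2) ≤ 2 ^ k) :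
    ((2 : ℝ) ^ k)⁻¹ ≤ ((d : ℝ) + 2)⁻¹ * (1 - ((d : ℝ) + 2)⁻¹) ^ (d + 1) := by
  calc ((2 : ℝ) ^ k)⁻¹ ≤ (Real.exp 1 * ((d : ℝ) + 2))⁻¹ := inv_anti₀ (by positivity) he
    _ ≤ ((1 + ((d + 1 : ℕ) : ℝ)⁻¹) ^ (d + 1) * ((d : ℝ) + 2))⁻¹ :=
        inv_anti₀ (by positivity) (by gcongr; exact Real.one_add_inv_pow_le_exp)
    _ = ((d : ℝ) + 2)⁻¹ * (1 - ((d : ℝ) + 2)⁻¹) ^ (d + 1) := by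
        have h : 1 - ((d : ℝ) + 2)⁻¹ = (1 + ((d + 1 : ℕ) : ℝ)⁻¹)⁻¹ := by
          push_cast
          field_simp
          ring
        rw [h, inv_pow, mul_inv, mul_comm]

section Hypergraph

variable {V : Type*} [DecidableEq V]

-- A set `s` of vertices encodes the colouring `v ↦ decide (v ∈ s)`.
def IsMonochromatic (p : Finset V × Bool) (s : Finset V) : Prop :=
  ∀ v ∈ p.1, decide (v ∈ s) = p.2

instance (p : Finset V × Bool) : DecidablePred (IsMonochromatic p) :=
  fun _ => inferInstanceAs (Decidable (∀ v ∈ p.1, _))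

lemma card_filter_isMonochromatic_mul_le {X : Finset (Finset V)} {e : Finset V} {b : Bool}
    (hX : ∀ s ∈ X, IsMonochromatic (e, b) s → ∀ t ⊆ e, s ∆ t ∈ X) :
    #(X.filter (IsMonochromatic (e, b))) * 2 ^ #e ≤ #X := by
  rw [← card_powerset e, ← card_product]
  refine card_le_card_of_injOn (fun q => q.1 ∆ q.2) ?_ ?_
  · rintro ⟨s, t⟩ hst
    simp only [coe_product, Set.mem_prod, mem_coe, mem_filter, mem_powerset] at hst
    exact hX s hst.1.1 hst.1.2 t hst.2
  · rintro ⟨s, t⟩ hst ⟨s', t'⟩ hst' heq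
    simp only [coe_product, Set.mem_prod, mem_coe, mem_filter, mem_powerset] at hst hst'
    obtain ⟨⟨-, hs⟩, ht⟩ := hst
    obtain ⟨⟨-, hs'⟩, ht'⟩ := hst'
    have key : ∀ v, (v ∈ s ↔ v ∈ s') ∧ (v ∈ t ↔ v ∈ t') := by
      intro v
      have hv := congrArg (v ∈ ·) heq
      simp only [mem_symmDiff, eq_iff_iff] at hv
      by_cases hve : v ∈ e
      · have h1 := hs v hve
        have h2 := hs' v hve
        cases b <;> simp_all [not_iff_not]
      · have : v ∉ t := fun h => hve (ht h)
        have : v ∉ t' := fun h => hve (ht' h)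
        simp_all
    exact Prod.ext (ext fun v => (key v).1) (ext fun v => (key v).2)

lemma symmDiff_mem_avoiding {W e t s : Finset V} {b : Bool} {S : Finset (Finset V × Bool)}
    (hS : ∀ p ∈ S, p.2 ≠ b → Disjoint p.1 e) (he : e ⊆ W) (ht : t ⊆ e)
    (hs : s ∈ avoiding W.powerset IsMonochromatic S) (hmono : IsMonochromatic (e, b) s) :
    s ∆ t ∈ avoiding W.powerset IsMonochromatic S := by
  rw [mem_avoiding, mem_powerset] at hs ⊢
  obtain ⟨hsW, hsS⟩ := hs
  refine ⟨symmDiff_le_sup.trans (union_subset hsW (ht.trans he)),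
    fun p hp hp_mono => hsS p hp ?_⟩
  have hpt : ∀ v ∈ p.1, v ∉ t := by
    intro v hv hvt
    by_cases hb : p.2 = b
    · have h1 := hmono v (ht hvt)
      have h2 := hp_mono v hv
      simp only [mem_symmDiff, hvt] at h2
      cases b <;> simp_all
    · exact disjoint_left.1 (hS p hp hb) hv (ht hvt)
  intro v hv
  simpa [mem_symmDiff, hpt v hv] using hp_mono v hv

def conflicts (E : Finset (Finset V)) (p : Finset V × Bool) : Finset (Finset V × Bool) :=
  E.filter (¬ Disjoint · p.1) ×ˢ {!p.2}

lemma card_conflicts_le (E : Finset (Finset V)) (p : Finset V × Bool) :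
    #(conflicts E p) ≤ #(E.filter fun f => f ≠ p.1 ∧ (f ∩ p.1).Nonempty) + 1 := by
  rw [conflicts, card_product, card_singleton, mul_one]
  refine (card_le_card fun f hf => ?_).trans (card_insert_le p.1 _)
  rw [mem_filter] at hf
  rw [mem_insert, mem_filter, ← not_disjoint_iff_nonempty_inter]
  tauto

lemma card_filter_isMonochromatic_le {W : Finset V} {E : Finset (Finset V)} {k : ℕ}
    (hW : ∀ e ∈ E, e ⊆ W) (hk : ∀ e ∈ E, k ≤ #e) {p : Finset V × Bool} (hp : p ∈ E ×ˢ univ)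
    {S : Finset (Finset V × Bool)} (hS : S ⊆ E ×ˢ univ) (hdisj : Disjoint S (conflicts E p)) :
    (#((avoiding W.powerset IsMonochromatic S).filter (IsMonochromatic p)) : ℝ) ≤
      ((2 : ℝ) ^ k)⁻¹ * #(avoiding W.powerset IsMonochromatic S) := by
  obtain ⟨e, b⟩ := p
  have he : e ∈ E := (mem_product.1 hp).1
  have hS_far : ∀ q ∈ S, q.2 ≠ b → Disjoint q.1 e := by
    intro q hq hqb
    by_contra hqe
    refine disjoint_left.1 hdisj hq (mem_product.2 ⟨mem_filter.2 ⟨?_, hqe⟩, ?_⟩)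
    · exact (mem_product.1 (hS hq)).1
    · exact mem_singleton.2 (Bool.eq_not_iff.2 hqb)
  have hflip := card_filter_isMonochromatic_mul_le fun s hs hmono t ht =>
    symmDiff_mem_avoiding hS_far (hW e he) ht hs hmono
  have hk_le : 2 ^ k ≤ 2 ^ #e := Nat.pow_le_pow_right two_pos (hk e he)
  rw [inv_mul_eq_div, le_div_iff₀ (by positivity)]
  exact_mod_cast (Nat.mul_le_mul_left _ hk_le).trans hflip

end Hypergraph

/-- A hypergraph (vertex set V, hyperedges E) in which every hyperedge
has at least k vertices and meets at most d other hyperedges, with e(d+2) ≤ 2^k,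
is 2-colorable. -/
theorem stmt1 {V : Type*} [DecidableEq V] (E : Finset (Finset V)) (k d : ℕ)
    (hk : ∀ e ∈ E, k ≤ e.card)
    (hd : ∀ e ∈ E, (E.filter (fun f => f ≠ e ∧ (f ∩ e).Nonempty)).card ≤ d)
    (he : Real.exp 1 * ((d : ℝ) + 2) ≤ 2 ^ k) :
    ∃ c : V → Bool, ∀ e ∈ E, (∃ v ∈ e, c v = true) ∧ (∃ v ∈ e, c v = false) := by
  set W := E.sup id
  have hW : ∀ e ∈ E, e ⊆ W := fun e heE => le_sup (f := id) heE
  have hx : 0 < 1 - ((d : ℝ) + 2)⁻¹ := sub_pos.2 (inv_lt_one_of_one_lt₀ (by linarith))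
  have hΓ : ∀ p ∈ E ×ˢ univ, #(conflicts E p) ≤ d + 1 := fun p hp =>
    (card_conflicts_le E p).trans (Nat.succ_le_succ (hd p.1 (mem_product.1 hp).1))
  have hbound := one_sub_pow_mul_card_le_card_avoiding (Ω := W.powerset) (by positivity)
    (sub_pos.1 hx).le hΓ (inv_two_pow_le_inv_mul_one_sub_pow he) fun p hp S hS hdisj =>
      card_filter_isMonochromatic_le hW hk hp hS hdisj
  obtain ⟨s, hs⟩ : (avoiding W.powerset IsMonochromatic (E ×ˢ univ)).Nonempty := by
    rw [← card_pos, ← Nat.cast_pos (α := ℝ)]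
    exact lt_of_lt_of_le (by positivity) hbound
  refine ⟨fun v => decide (v ∈ s), fun e heE => ?_⟩
  have hgood := (mem_avoiding.1 hs).2
  have h_true := hgood (e, false) (mem_product.2 ⟨heE, mem_univ _⟩)
  have h_false := hgood (e, true) (mem_product.2 ⟨heE, mem_univ _⟩)
  simp only [IsMonochromatic, not_forall, exists_prop, Bool.not_eq_false, Bool.not_eq_true]
    at h_true h_false
  exact ⟨h_true, h_false⟩
end

section
/- For any graph G with χ(G) ≥ 4, the dynamic chromatic number satisfies χ₂(G) ≤ χ(G) + α(G), where α(G) is the independence number of G. -/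
open SimpleGraph Finset

/-! Take a proper `χ`-colouring `c` with as few bad vertices (degree at least 2, monochromatic
neighbourhood) as possible, and a maximal independent set `I` containing a whole colour class,
say that of `top`. Every vertex of `I` gets a fresh colour of its own, except that a bad vertex
`b ∈ I` hands its fresh colour to a chosen neighbour `f b` and takes `top`, which no vertex
outside `I` uses. This leaves bad only the vertices all of whose neighbours are bad vertices of
`I` ("enclosed" vertices). Recolouring an enclosed `x` would cure one of its neighbours and spoil
nothing, so by minimality `N(x)` already carries every colour other than `c x`: one neighbour is
coloured `top`, another one is not. So the bad vertices of `I` adjacent to an enclosed vertex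
and not coloured `top` by `c` switch from `top` to one spare fresh colour `ff`, which exists because
two neighbours of an enclosed vertex can hand their fresh colour to that same vertex. Altogether
at most `χ + |I| ≤ χ + α` colours are used. -/

section

variable {V α β : Type*}

theorem exists_mem_notMem_invFunOn_image_image [Nonempty V] {f : V → β} {s : Set V}
    (hf : ¬ Set.InjOn f s) : ∃ b ∈ s, b ∉ Function.invFunOn f s '' (f '' s) := by
  by_contra! h
  exact hf (Set.injOn_iff_invFunOn_image_image_eq_self.2
    ((Function.invFunOn_image_image_subset f s).antisymm h))

section Basic

variable (G : SimpleGraph V)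

theorem DynColoring.of_eq_iff [Fintype V] [DecidableRel G.Adj] {c : V → α} {c' : V → β}
    (hc : DynColoring G c) (h : ∀ u w, c' u = c' w ↔ c u = c w) : DynColoring G c' := by
  refine ⟨fun u w huw hc' => hc.1 huw ((h u w).1 hc'), fun v hv => ?_⟩
  obtain ⟨u, w, hu, hw, hne⟩ := hc.2 v hv
  exact ⟨u, w, hu, hw, mt (h u w).1 hne⟩

theorem dynChi_le_card_image [Fintype V] [DecidableRel G.Adj] [DecidableEq α] {c : V → α}
    (hc : DynColoring G c) : dynChi G ≤ (univ.image c).card := by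
  let e := (univ.image c).equivFin
  refine Nat.sInf_le ⟨fun v => e ⟨c v, mem_image_of_mem c (mem_univ v)⟩, hc.of_eq_iff G ?_⟩
  simp [e.injective.eq_iff]

theorem colorable_chi [Fintype V] : G.Colorable (chi G) :=
  Nat.sInf_mem (s := {n | G.Colorable n}) ⟨_, G.colorable_of_fintype⟩

theorem chi_le_card [Fintype V] : chi G ≤ Fintype.card V :=
  Nat.sInf_le G.colorable_of_fintype

theorem card_le_alpha [Fintype V] {s : Finset V} (hs : G.IsIndepSet s) : s.card ≤ alpha G := by
  refine le_csSup ⟨Fintype.card V, ?_⟩ ⟨s, fun u hu w hw huw => hs hu hw huw.ne huw, rfl⟩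
  rintro n ⟨t, -, rfl⟩
  exact t.card_le_univ

theorem exists_isIndepSet_superset_forall_exists_adj [Finite V] [DecidableEq V] {s : Finset V}
    (hs : G.IsIndepSet s) :
    ∃ I : Finset V, s ⊆ I ∧ G.IsIndepSet I ∧ ∀ x ∉ I, ∃ y ∈ I, G.Adj x y := by
  obtain ⟨I, hsI, hI⟩ := Finite.exists_le_maximal (p := fun t : Finset V => G.IsIndepSet t) hs
  refine ⟨I, hsI, hI.prop, fun x hx => ?_⟩
  by_contra! hxI
  have hins : G.IsIndepSet (insert x I : Finset V) := by
    rw [coe_insert]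
    exact hI.prop.insert fun y hy _ => ⟨hxI y hy, fun hyx => hxI y hy hyx.symm⟩
  exact hx (hI.eq_of_le hins (subset_insert x I) ▸ mem_insert_self x I)

theorem ProperColoring.update [DecidableEq V] {c : V → α} (hc : ProperColoring G c)
    {x : V} {t : α} (h : ∀ ⦃b⦄, G.Adj x b → c b ≠ t) :
    ProperColoring G (Function.update c x t) := by
  intro u w huw
  by_cases hu : u = x
  · subst hu
    rw [Function.update_self, Function.update_of_ne huw.ne.symm]
    exact (h huw).symm
  · by_cases hw : w = x
    · subst hw
      rw [Function.update_self, Function.update_of_ne hu]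
      exact h huw.symm
    · rw [Function.update_of_ne hu, Function.update_of_ne hw]
      exact hc huw

end Basic

section BadVertices

variable (G : SimpleGraph V) [Fintype V] [DecidableRel G.Adj]

def IsBadVertex (c : V → α) (v : V) : Prop :=
  2 ≤ G.degree v ∧ ∀ ⦃u w⦄, G.Adj v u → G.Adj v w → c u = c w

open Classical in
noncomputable def badSet (c : V → α) : Finset V := univ.filter (IsBadVertex G c)

@[simp]
theorem mem_badSet {c : V → α} {v : V} : v ∈ badSet G c ↔ IsBadVertex G c v := by
  simp [badSet]

def IsBadMinimal (c : V → α) : Prop :=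
  ProperColoring G c ∧
    ∀ c' : V → α, ProperColoring G c' → (badSet G c).card ≤ (badSet G c').card

theorem exists_isBadMinimal {c : V → α} (hc : ProperColoring G c) :
    ∃ c₀ : V → α, IsBadMinimal G c₀ := by
  obtain ⟨c₀, hc₀, hmin⟩ :=
    (InvImage.wf (fun c : V → α => (badSet G c).card) wellFounded_lt).has_min
      {c | ProperColoring G c} ⟨c, hc⟩
  exact ⟨c₀, hc₀, fun c' hc' => not_lt.1 (hmin c' hc')⟩

variable [DecidableEq V]

theorem badSet_update_ssubset {c : V → α} {x b₀ : V} {t : α}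
    (hx : ∀ ⦃b⦄, G.Adj x b → IsBadVertex G c b) (hb₀ : G.Adj x b₀) (ht : t ≠ c x) :
    badSet G (Function.update c x t) ⊂ badSet G c := by
  have hsub : badSet G (Function.update c x t) ⊆ badSet G c := by
    intro w
    simp only [mem_badSet]
    rintro ⟨hdeg, hmono⟩
    by_cases hxw : G.Adj x w
    · exact hx hxw
    refine ⟨hdeg, fun u u' hu hu' => ?_⟩
    have hne : ∀ {y}, G.Adj w y → y ≠ x := fun hy hyx => hxw (hyx ▸ hy).symm
    simpa only [Function.update_of_ne (hne hu), Function.update_of_ne (hne hu')] using hmono hu hu'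
  refine (ssubset_iff_of_subset hsub).2 ⟨b₀, (mem_badSet G).2 (hx hb₀), fun hb₀' => ?_⟩
  obtain ⟨-, hmono⟩ := (mem_badSet G).1 hb₀'
  obtain ⟨y, hy, hyx⟩ := exists_mem_ne (hx hb₀).1 x
  rw [mem_neighborFinset] at hy
  have := hmono hb₀.symm hy
  rw [Function.update_self, Function.update_of_ne hyx] at this
  exact ht (this.trans ((hx hb₀).2 hy hb₀.symm))

theorem IsBadMinimal.exists_adj_eq {c : V → α} (hc : IsBadMinimal G c) {x b₀ : V} {t : α}
    (hx : ∀ ⦃b⦄, G.Adj x b → IsBadVertex G c b) (hb₀ : G.Adj x b₀) (ht : t ≠ c x) :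
    ∃ b, G.Adj x b ∧ c b = t := by
  by_contra! h
  exact (hc.2 _ (hc.1.update G h)).not_gt (card_lt_card (badSet_update_ssubset G hx hb₀ ht))

end BadVertices

section Recolor

open Function

variable (G : SimpleGraph V) [Fintype V] [DecidableRel G.Adj]
  (c : V → α) (top : α) (I : Set V) (f : V → V) (ff : V)

def badIn : Set V := {b | b ∈ I ∧ IsBadVertex G c b}

def IsEnclosed (x : V) : Prop := 2 ≤ G.degree x ∧ ∀ ⦃b⦄, G.Adj x b → b ∈ badIn G c I

def IsSpare [Nonempty V] : Prop :=
  (∃ x, IsEnclosed G c I x) →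
    ff ∈ badIn G c I ∧ ff ∉ invFunOn f (badIn G c I) '' (f '' badIn G c I)

open Classical in
/-- `.inl a` is an original colour and `.inr v` the fresh colour owned by the vertex `v ∈ I`;
`invFunOn f (badIn G c I) u` is the bad vertex whose fresh colour `u` receives. -/
noncomputable def recolor [Nonempty V] (w : V) : α ⊕ V :=
  if w ∈ I then
    if w ∈ badIn G c I then
      if c w ≠ top ∧ ∃ x, IsEnclosed G c I x ∧ G.Adj x w then .inr ff else .inl top
    else .inr w
  else if w ∈ f '' badIn G c I then .inr (invFunOn f (badIn G c I) w) else .inl (c w)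

variable {G c top I f ff} [Nonempty V]

theorem recolor_eq_inl {w : V} {a : α} (h : recolor G c top I f ff w = .inl a) :
    (w ∈ badIn G c I ∧ a = top) ∨ (w ∉ I ∧ w ∉ f '' badIn G c I ∧ a = c w) := by
  unfold recolor at h
  split_ifs at h <;> simp_all

theorem recolor_eq_inr {w v : V} (h : recolor G c top I f ff w = .inr v) :
    (w ∈ badIn G c I ∧ (∃ x, IsEnclosed G c I x) ∧ v = ff) ∨
      (w ∈ I ∧ w ∉ badIn G c I ∧ v = w) ∨
      (w ∈ f '' badIn G c I ∧ v = invFunOn f (badIn G c I) w) := by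
  unfold recolor at h
  split_ifs at h with h₁ h₂ h₃ <;> cases h
  · exact .inl ⟨h₂, h₃.2.imp fun _ hx => hx.1, rfl⟩
  · exact .inr (.inl ⟨h₁, h₂, rfl⟩)
  · exact .inr (.inr ⟨by assumption, rfl⟩)

theorem recolor_eq_recolor
    (hff : IsSpare G c I f ff)
    (htop : ∀ v, c v = top → v ∈ I) {w₁ w₂ : V}
    (h : recolor G c top I f ff w₁ = recolor G c top I f ff w₂) :
    w₁ = w₂ ∨ (w₁ ∈ badIn G c I ∧ w₂ ∈ badIn G c I) ∨
      (w₁ ∉ I ∧ w₁ ∉ f '' badIn G c I ∧ w₂ ∉ I ∧ w₂ ∉ f '' badIn G c I ∧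
        c w₁ = c w₂) := by
  have hrep : ∀ {w}, w ∈ f '' badIn G c I → invFunOn f (badIn G c I) w ∈ badIn G c I ∧
      f (invFunOn f (badIn G c I) w) = w := fun ⟨b, hb, hbw⟩ => invFunOn_pos ⟨b, hb, hbw⟩
  rcases h₁ : recolor G c top I f ff w₁ with a | v <;> rw [h₁] at h
  · rcases recolor_eq_inl h₁ with ⟨hB₁, rfl⟩ | ⟨hI₁, hU₁, rfl⟩ <;>
      rcases recolor_eq_inl h.symm with ⟨hB₂, ha⟩ | ⟨hI₂, hU₂, ha⟩
    · exact .inr (.inl ⟨hB₁, hB₂⟩)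
    · exact absurd (htop _ ha.symm) hI₂
    · exact absurd (htop _ ha) hI₁
    · exact .inr (.inr ⟨hI₁, hU₁, hI₂, hU₂, ha⟩)
  · rcases recolor_eq_inr h₁ with
        ⟨hB₁, hx₁, rfl⟩ | ⟨hI₁, hB₁, rfl⟩ | ⟨hU₁, rfl⟩ <;>
      rcases recolor_eq_inr h.symm with
        ⟨hB₂, hx₂, hv⟩ | ⟨hI₂, hB₂, hv⟩ | ⟨hU₂, hv⟩
    · exact .inr (.inl ⟨hB₁, hB₂⟩)
    · exact absurd (hv ▸ (hff hx₁).1) hB₂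
    · exact absurd ⟨w₂, hU₂, hv.symm⟩ (hff hx₁).2
    · exact absurd (hv ▸ (hff hx₂).1) hB₁
    · exact .inl hv
    · exact absurd (hv ▸ (hrep hU₂).1) hB₁
    · exact absurd ⟨w₁, hU₁, hv⟩ (hff hx₂).2
    · exact absurd (hv ▸ (hrep hU₁).1) hB₂
    · exact .inl ((hrep hU₁).2.symm.trans (hv ▸ (hrep hU₂).2))

theorem recolor_properColoring (hc : ProperColoring G c) (hI : G.IsIndepSet I)
    (hff : IsSpare G c I f ff)
    (htop : ∀ v, c v = top → v ∈ I) : ProperColoring G (recolor G c top I f ff) := by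
  intro u w huw h
  rcases recolor_eq_recolor hff htop h with rfl | ⟨hu, hw⟩ | ⟨-, -, -, -, hcuw⟩
  · exact huw.ne rfl
  · exact hI hu.1 hw.1 huw.ne huw
  · exact hc huw hcuw

theorem exists_adj_recolor_ne_of_mem (hI : G.IsIndepSet I)
    (hf : ∀ b ∈ badIn G c I, G.Adj b (f b))
    (hff : IsSpare G c I f ff)
    (htop : ∀ v, c v = top → v ∈ I) {v : V} (hv : 2 ≤ G.degree v) (hvI : v ∈ I) :
    ∃ u w, G.Adj v u ∧ G.Adj v w ∧ recolor G c top I f ff u ≠ recolor G c top I f ff w := by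
  by_cases hvB : v ∈ badIn G c I
  · obtain ⟨u, hu, hne⟩ := exists_mem_ne hv (f v)
    refine ⟨f v, u, hf v hvB, (mem_neighborFinset G v u).1 hu, fun h => ?_⟩
    rcases recolor_eq_recolor hff htop h with h | ⟨hB, -⟩ | ⟨-, hU, -⟩
    · exact hne h.symm
    · exact hI hvI hB.1 (hf v hvB).ne (hf v hvB)
    · exact hU ⟨v, hvB, rfl⟩
  · obtain ⟨u, w, hu, hw, hne⟩ : ∃ u w, G.Adj v u ∧ G.Adj v w ∧ c u ≠ c w := by
      simpa [badIn, IsBadVertex, hvI, hv] using hvB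
    refine ⟨u, w, hu, hw, fun h => ?_⟩
    rcases recolor_eq_recolor hff htop h with rfl | ⟨hB, -⟩ | ⟨-, -, -, -, hcuw⟩
    · exact hne rfl
    · exact hI hvI hB.1 hu.ne hu
    · exact hne hcuw

theorem exists_adj_recolor_ne_of_isEnclosed {v : V} (hv : IsEnclosed G c I v)
    (hsplit : ∃ b b', G.Adj v b ∧ G.Adj v b' ∧ c b = top ∧ c b' ≠ top) :
    ∃ u w, G.Adj v u ∧ G.Adj v w ∧ recolor G c top I f ff u ≠ recolor G c top I f ff w := by
  obtain ⟨b, b', hb, hb', hcb, hcb'⟩ := hsplit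
  refine ⟨b, b', hb, hb', ?_⟩
  have hbB := hv.2 hb
  have hb'B := hv.2 hb'
  have hR : ∃ x, IsEnclosed G c I x ∧ G.Adj x b' := ⟨v, hv, hb'⟩
  simp [recolor, hbB.1, hbB, hb'B.1, hb'B, hcb, hcb', hR]

theorem exists_adj_recolor_ne_of_not_mem
    (hdom : ∀ x ∉ I, ∃ y ∈ I, G.Adj x y)
    (hff : IsSpare G c I f ff)
    (htop : ∀ v, c v = top → v ∈ I) {v : V} (hv : 2 ≤ G.degree v) (hvI : v ∉ I)
    (hvZ : ¬ IsEnclosed G c I v) :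
    ∃ u w, G.Adj v u ∧ G.Adj v w ∧ recolor G c top I f ff u ≠ recolor G c top I f ff w := by
  obtain ⟨p, hp, hpB⟩ : ∃ p, G.Adj v p ∧ p ∉ badIn G c I := by
    simpa [IsEnclosed, hv] using hvZ
  by_cases hpP : p ∉ I ∧ p ∉ f '' badIn G c I
  · obtain ⟨y, hyI, hy⟩ := hdom v hvI
    refine ⟨y, p, hy, hp, fun h => ?_⟩
    rcases recolor_eq_recolor hff htop h with rfl | ⟨-, hB⟩ | ⟨hyI', -⟩
    · exact hpP.1 hyI
    · exact hpB hB
    · exact hyI' hyI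
  · obtain ⟨q, hq, hne⟩ := exists_mem_ne hv p
    refine ⟨p, q, hp, (mem_neighborFinset G v q).1 hq, fun h => ?_⟩
    rcases recolor_eq_recolor hff htop h with h | ⟨hB, -⟩ | ⟨hpI, hpU, -⟩
    · exact hne h.symm
    · exact hpB hB
    · exact hpP ⟨hpI, hpU⟩

theorem recolor_dynColoring (hc : ProperColoring G c) (hI : G.IsIndepSet I)
    (hdom : ∀ x ∉ I, ∃ y ∈ I, G.Adj x y) (htop : ∀ v, c v = top → v ∈ I)
    (hsplit : ∀ x, IsEnclosed G c I x →
      ∃ b b', G.Adj x b ∧ G.Adj x b' ∧ c b = top ∧ c b' ≠ top)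
    (hf : ∀ b ∈ badIn G c I, G.Adj b (f b))
    (hff : IsSpare G c I f ff) :
    DynColoring G (recolor G c top I f ff) := by
  refine ⟨recolor_properColoring hc hI hff htop, fun v hv => ?_⟩
  by_cases hvI : v ∈ I
  · exact exists_adj_recolor_ne_of_mem hI hf hff htop hv hvI
  by_cases hvZ : IsEnclosed G c I v
  · exact exists_adj_recolor_ne_of_isEnclosed hvZ (hsplit v hvZ)
  · exact exists_adj_recolor_ne_of_not_mem hdom hff htop hv hvI hvZ

theorem card_image_recolor_le [Fintype α] [DecidableEq α] [DecidableEq V] {I : Finset V}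
    (hff : IsSpare G c I f ff) :
    (univ.image (recolor G c top I f ff)).card ≤ Fintype.card α + I.card := by
  have hsub : univ.image (recolor G c top I f ff) ⊆ univ.image .inl ∪ I.image .inr := by
    simp only [subset_iff, mem_image, mem_univ, true_and, mem_union, forall_exists_index,
      forall_apply_eq_imp_iff]
    intro w
    rcases h : recolor G c top I f ff w with a | v
    · exact .inl ⟨a, rfl⟩
    · refine .inr ⟨v, ?_, rfl⟩
      rcases recolor_eq_inr h with ⟨-, hx, rfl⟩ | ⟨hw, -, rfl⟩ | ⟨hw, rfl⟩
      · exact (hff hx).1.1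
      · exact hw
      · obtain ⟨b, hb, rfl⟩ := hw
        exact (invFunOn_mem ⟨b, hb, rfl⟩).1
  calc _ ≤ (univ.image .inl ∪ I.image .inr : Finset (α ⊕ V)).card := card_le_card hsub
    _ ≤ _ := (card_union_le _ _).trans (add_le_add card_image_le card_image_le)

end Recolor

section Construction

variable (G : SimpleGraph V) [Fintype V] [DecidableRel G.Adj]

theorem exists_recolor_data [Nonempty V] (c : V → α) (I : Set V) :
    ∃ (f : V → V) (ff : V), (∀ b ∈ badIn G c I, G.Adj b (f b)) ∧ IsSpare G c I f ff := by
  have hnbr : ∀ b ∈ badIn G c I, ∃ u, G.Adj b u := fun b hb => by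
    obtain ⟨u, hu⟩ := card_pos.1 (hb.2.1.trans_lt' two_pos)
    exact ⟨u, (mem_neighborFinset G b u).1 hu⟩
  choose! g hg using hnbr
  by_cases hZ : ∃ x, IsEnclosed G c I x
  swap
  · exact ⟨g, Classical.arbitrary V, hg, fun h => absurd h hZ⟩
  obtain ⟨x, hx⟩ := hZ
  classical
  let f b := if G.Adj b x then x else g b
  have hf : ∀ b ∈ badIn G c I, G.Adj b (f b) := fun b hb => by
    dsimp only [f]
    split_ifs with h
    exacts [h, hg b hb]
  have hnotinj : ¬ Set.InjOn f (badIn G c I) := by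
    obtain ⟨b₁, hb₁, b₂, hb₂, hne⟩ := one_lt_card.1 hx.1
    rw [mem_neighborFinset] at hb₁ hb₂
    exact fun hinj => hne (hinj (hx.2 hb₁) (hx.2 hb₂) (by simp [f, hb₁.symm, hb₂.symm]))
  obtain ⟨ff, hff, hffn⟩ := exists_mem_notMem_invFunOn_image_image hnotinj
  exact ⟨f, ff, hf, fun _ => ⟨hff, hffn⟩⟩

theorem IsBadMinimal.exists_adj_eq_and_adj_ne [DecidableEq V] {c : V → α}
    (hc : IsBadMinimal G c) {top : α} {I : Set V} (hI : G.IsIndepSet I)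
    (htop : ∀ v, c v = top → v ∈ I) (hthree : ∀ a b : α, ∃ t, t ≠ a ∧ t ≠ b)
    {x : V} (hx : IsEnclosed G c I x) :
    ∃ b b', G.Adj x b ∧ G.Adj x b' ∧ c b = top ∧ c b' ≠ top := by
  obtain ⟨b₀, hb₀⟩ := card_pos.1 (hx.1.trans_lt' two_pos)
  rw [mem_neighborFinset] at hb₀
  have hxI : x ∉ I := fun hxI => hI hxI (hx.2 hb₀).1 hb₀.ne hb₀
  have hbad : ∀ ⦃b⦄, G.Adj x b → IsBadVertex G c b := fun _ hb => (hx.2 hb).2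
  obtain ⟨t, htx, httop⟩ := hthree (c x) top
  obtain ⟨b, hb, hcb⟩ := hc.exists_adj_eq G hbad hb₀ fun h => hxI (htop x h.symm)
  obtain ⟨b', hb', hcb'⟩ := hc.exists_adj_eq G hbad hb₀ htx
  exact ⟨b, b', hb, hb', hcb, hcb' ▸ httop⟩

theorem exists_dynColoring_card_image_le [Fintype α] [DecidableEq α] [DecidableEq V] [Nonempty V]
    {c : V → α} (hc : IsBadMinimal G c) (hthree : ∀ a b : α, ∃ t, t ≠ a ∧ t ≠ b)
    {top : α} {I : Finset V} (hI : G.IsIndepSet I) (hdom : ∀ x ∉ I, ∃ y ∈ I, G.Adj x y)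
    (htop : ∀ v, c v = top → v ∈ I) :
    ∃ c' : V → α ⊕ V,
      DynColoring G c' ∧ (univ.image c').card ≤ Fintype.card α + I.card := by
  obtain ⟨f, ff, hf, hff⟩ := exists_recolor_data G c I
  refine ⟨recolor G c top I f ff, ?_, card_image_recolor_le hff⟩
  exact recolor_dynColoring hc.1 hI hdom htop
    (fun x hx => hc.exists_adj_eq_and_adj_ne G hI htop hthree hx) hf hff

end Construction

end

/-- For any graph G with χ(G) ≥ 4, χ₂(G) ≤ χ(G) + α(G). -/
theorem stmt5 {V : Type*} [Fintype V] (G : SimpleGraph V) [DecidableRel G.Adj]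
    (h : 4 ≤ chi G) :
    dynChi G ≤ chi G + alpha G := by
  classical
  obtain ⟨C⟩ := colorable_chi G
  have : Nonempty V := Fintype.card_pos_iff.1 (by linarith [chi_le_card G])
  obtain ⟨c, hc⟩ := exists_isBadMinimal G (c := C) fun _ _ huv => C.valid huv
  let top : Fin (chi G) := ⟨chi G - 1, by omega⟩
  obtain ⟨I, hsub, hI, hdom⟩ := exists_isIndepSet_superset_forall_exists_adj G
    (s := univ.filter (c · = top)) fun u hu w hw _ huw => hc.1 huw (by simp_all)
  obtain ⟨c', hc', hcard⟩ := exists_dynColoring_card_image_le G hc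
    (fun a b => Fin.exists_ne_and_ne_of_two_lt a b (by omega)) hI hdom
    (fun v hv => hsub (by simpa using hv))
  calc dynChi G ≤ (univ.image c').card := dynChi_le_card_image G hc'
    _ ≤ chi G + I.card := by simpa using hcard
    _ ≤ chi G + alpha G := by gcongr; exact card_le_alpha G hI
end

section
/- For every integer n > 1, there exists a regular graph G with χ(G) = n and χ₂(G) > n. -/
open SimpleGraph Finset

/-! Write `n = p + 2`. The graph is a cycle of `m = 3p + 4` cliques `B_i` of size `n - 1`; for each
`i` and each `j < n` a vertex `x_{i,j}` is joined to all of `B_i ∪ B_{i+1}`, and for each `j` there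
are `n` hubs `w_{j,l}`, each adjacent to every `x_{i,j}`. Coloring `B_i` by `0, …, n - 2`, the
`x`'s by `n - 1` and the hubs by `0` shows `χ ≤ n`, and `B_0 ∪ {x_{0,0}}` is an `n`-clique.

In an `n`-coloring, every vertex joined to all of the `(n - 1)`-clique `B_i` receives the one
color missing on `B_i`. Thus `x_{i,j}` and `x_{i-1,j'}` share a color, and going around the cycle
all the `x`'s do, so every hub sees a single color and no `n`-coloring is dynamic. -/

section Coloring

variable {V : Type*} {G : SimpleGraph V}

lemma ProperColoring.eq_of_forall_adj_of_isClique {α : Type*} [Fintype α] {c : V → α}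
    (hc : ProperColoring G c) {s : Finset V} (hs : G.IsClique (s : Set V))
    (hcard : Fintype.card α = s.card + 1) {u v : V} (hu : ∀ x ∈ s, G.Adj u x)
    (hv : ∀ x ∈ s, G.Adj v x) : c u = c v := by
  classical
  have hinj : Set.InjOn c s := fun x hx y hy hxy => by
    by_contra hne
    exact hc (hs hx hy hne) hxy
  have hmiss : ∀ z, (∀ x ∈ s, G.Adj z x) → c z ∈ (s.image c)ᶜ := by
    intro z hz
    simp only [mem_compl, mem_image, not_exists, not_and]
    exact fun x hx hxz => hc (hz x hx) hxz.symm
  have hone : (s.image c)ᶜ.card ≤ 1 := by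
    rw [card_compl, card_image_of_injOn hinj, hcard]
    omega
  exact card_le_one.mp hone _ (hmiss u hu) _ (hmiss v hv)

lemma chi_eq_of_colorable_of_isNClique {n : ℕ} {s : Finset V} (hcol : G.Colorable n)
    (hs : G.IsNClique n s) : chi G = n :=
  le_antisymm (Nat.sInf_le hcol) <|
    le_csInf ⟨n, hcol⟩ fun _ hk => hs.card_eq ▸ hs.isClique.card_le_of_colorable hk

variable [Fintype V] [DecidableRel G.Adj]

lemma DynColoring.comp_injective {α β : Type*} {c : V → α} (hc : DynColoring G c) {f : α → β}
    (hf : Function.Injective f) : DynColoring G (f ∘ c) := by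
  refine ⟨fun u v huv h => hc.1 huv (hf h), fun v hv => ?_⟩
  obtain ⟨u, w, hu, hw, hne⟩ := hc.2 v hv
  exact ⟨u, w, hu, hw, hf.ne hne⟩

lemma dynColoring_of_injective {α : Type*} {c : V → α} (hc : Function.Injective c) :
    DynColoring G c := by
  refine ⟨fun u v huv h => G.ne_of_adj huv (hc h), fun v hv => ?_⟩
  obtain ⟨u, hu, w, hw, hne⟩ := one_lt_card.mp (show 1 < (G.neighborFinset v).card from hv)
  exact ⟨u, w, (mem_neighborFinset ..).mp hu, (mem_neighborFinset ..).mp hw, hc.ne hne⟩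

lemma lt_dynChi_of_forall_not_dynColoring {n : ℕ}
    (h : ∀ c : V → Fin n, ¬ DynColoring G c) : n < dynChi G := by
  obtain ⟨c, hc⟩ : ∃ c : V → Fin (dynChi G), DynColoring G c :=
    Nat.sInf_mem (s := {n | ∃ c : V → Fin n, DynColoring G c})
      ⟨_, Fintype.equivFin V, dynColoring_of_injective (Fintype.equivFin V).injective⟩
  by_contra! hle
  exact h _ (hc.comp_injective (Fin.castLE_injective hle))

end Coloring

namespace CliqueCycle

/-- `inl (i, k)` is the `k`-th vertex of the clique `B_i`, `inr (inl (i, j))` is `x_{i,j}` and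
`inr (inr (j, l))` is the hub `w_{j,l}`; clique indices `i` live in `Fin (3p + 4)` and wrap
around. -/
abbrev Vert (p : ℕ) :=
  (Fin (3*p+4) × Fin (p+1)) ⊕ (Fin (3*p+4) × Fin (p+2)) ⊕ (Fin (p+2) × Fin (p+2))

def Adj (p : ℕ) : Vert p → Vert p → Prop
  | .inl b, .inl b' => b.1 = b'.1 ∧ b.2 ≠ b'.2
  | .inl b, .inr (.inl x) | .inr (.inl x), .inl b => b.1 = x.1 ∨ b.1 = x.1 + 1
  | .inr (.inl x), .inr (.inr w) | .inr (.inr w), .inr (.inl x) => x.2 = w.1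
  | _, _ => False

instance (p : ℕ) : DecidableRel (Adj p) := fun u v => by
  rcases u with _ | _ | _ <;> rcases v with _ | _ | _ <;> simp only [Adj] <;> infer_instance

def graph (p : ℕ) : SimpleGraph (Vert p) where
  Adj := Adj p
  symm := by
    constructor
    rintro (_ | _ | _) (_ | _ | _) h <;> simp only [Adj] at h ⊢
    all_goals first | exact h | exact ⟨h.1.symm, h.2.symm⟩
  loopless := by constructor; rintro (_ | _ | _) h <;> simp only [Adj] at h; exact h.2 rfl

instance (p : ℕ) : DecidableRel (graph p).Adj := inferInstanceAs (DecidableRel (Adj p))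

variable {p : ℕ}

@[simp]
lemma graph_adj {u v : Vert p} : (graph p).Adj u v ↔ Adj p u v := Iff.rfl

lemma neighborFinset_clique (i : Fin (3*p+4)) (k : Fin (p+1)) :
    (graph p).neighborFinset (.inl (i, k)) =
      disjSum ({i} ×ˢ {k}ᶜ) (disjSum ({i, i - 1} ×ˢ univ) ∅) := by
  ext (⟨_, _⟩ | ⟨_, _⟩ | ⟨_, _⟩) <;> simp [Adj, eq_comm, eq_sub_iff_add_eq, and_comm]

lemma neighborFinset_connector (i : Fin (3*p+4)) (j : Fin (p+2)) :
    (graph p).neighborFinset (.inr (.inl (i, j))) =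
      disjSum ({i, i + 1} ×ˢ univ) (disjSum ∅ ({j} ×ˢ univ)) := by
  ext (⟨_, _⟩ | ⟨_, _⟩ | ⟨_, _⟩) <;> simp [Adj, eq_comm]

lemma neighborFinset_hub (j l : Fin (p+2)) :
    (graph p).neighborFinset (.inr (.inr (j, l))) = disjSum ∅ (disjSum (univ ×ˢ {j}) ∅) := by
  ext (⟨_, _⟩ | ⟨_, _⟩ | ⟨_, _⟩) <;> simp [Adj, eq_comm]

/-- `3p + 4` is the degree of the clique vertices, `p + 2 * (p + 2)`, and of the `x`'s,
`2 * (p + 1) + (p + 2)`; taking that many cliques gives the hubs the same degree. -/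
lemma isRegularOfDegree : (graph p).IsRegularOfDegree (3*p+4) := by
  rintro (⟨i, k⟩ | ⟨i, j⟩ | ⟨j, l⟩) <;> rw [← card_neighborFinset_eq_degree]
  · rw [neighborFinset_clique, card_disjSum, card_disjSum, card_product, card_product,
      card_pair (Ne.symm (by simp))]
    simp [card_compl]
    omega
  · rw [neighborFinset_connector, card_disjSum, card_disjSum, card_product, card_product,
      card_pair (by simp)]
    simp
    omega
  · simp [neighborFinset_hub]

def coloring (p : ℕ) : Vert p → Fin (p+2)
  | .inl b => b.2.castSucc
  | .inr (.inl _) => Fin.last (p+1)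
  | .inr (.inr _) => 0

lemma properColoring_coloring : ProperColoring (graph p) (coloring p) := by
  rintro (_ | _ | _) (_ | _ | _) h <;> simp only [graph_adj, Adj] at h <;> simp only [coloring]
  · exact Fin.castSucc_injective _ |>.ne h.2
  · exact (Fin.castSucc_lt_last _).ne
  · exact (Fin.castSucc_lt_last _).ne'
  · exact (Fin.last_pos' ..).ne'
  · exact (Fin.last_pos' ..).ne

lemma colorable : (graph p).Colorable (p+2) :=
  ⟨Coloring.mk (coloring p) fun h => properColoring_coloring h⟩

def block (p : ℕ) (i : Fin (3*p+4)) : Finset (Vert p) :=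
  univ.map ⟨fun k => .inl (i, k), fun _ _ h => by simpa using h⟩

lemma card_block (i : Fin (3*p+4)) : (block p i).card = p + 1 := by
  simp [block]

lemma isClique_block (i : Fin (3*p+4)) : (graph p).IsClique (block p i : Set (Vert p)) := by
  rintro _ hu _ hv hne
  simp only [block, coe_map, Set.mem_image, mem_coe, mem_univ, true_and] at hu hv
  obtain ⟨k, rfl⟩ := hu
  obtain ⟨k', rfl⟩ := hv
  exact ⟨rfl, fun h : k = k' => hne (h ▸ rfl)⟩

lemma connector_adj_block {i i' : Fin (3*p+4)} (j : Fin (p+2)) (h : i' = i ∨ i' = i + 1) :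
    ∀ b ∈ block p i', (graph p).Adj (.inr (.inl (i, j))) b := by
  simp only [block, mem_map, mem_univ, true_and]
  rintro _ ⟨k, rfl⟩
  exact h

lemma isNClique_cons_block :
    (graph p).IsNClique (p+2) ((block p 0).cons (.inr (.inl (0, 0))) (by simp [block])) := by
  refine ⟨?_, by rw [card_cons, card_block]⟩
  rw [coe_cons, isClique_insert]
  exact ⟨isClique_block 0, fun b hb _ => connector_adj_block 0 (.inl rfl) b hb⟩

lemma chi_graph : chi (graph p) = p + 2 :=
  chi_eq_of_colorable_of_isNClique colorable isNClique_cons_block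

open Fin.NatCast in
lemma color_connector_eq {c : Vert p → Fin (p+2)} (hc : ProperColoring (graph p) c)
    (i : Fin (3*p+4)) (j : Fin (p+2)) : c (.inr (.inl (i, j))) = c (.inr (.inl (0, 0))) := by
  have hcard (i : Fin (3*p+4)) : Fintype.card (Fin (p+2)) = (block p i).card + 1 := by
    simp [card_block]
  have step (r : ℕ) (j : Fin (p+2)) : c (.inr (.inl ((r + 1 : ℕ), j))) = c (.inr (.inl (r, 0))) :=
    hc.eq_of_forall_adj_of_isClique (isClique_block _) (hcard _)
      (connector_adj_block j (.inl rfl)) (connector_adj_block 0 (.inr (by simp)))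
  have base (j : Fin (p+2)) : c (.inr (.inl (0, j))) = c (.inr (.inl (0, 0))) :=
    hc.eq_of_forall_adj_of_isClique (isClique_block 0) (hcard 0)
      (connector_adj_block j (.inl rfl)) (connector_adj_block 0 (.inl rfl))
  have along_cycle (r : ℕ) (j : Fin (p+2)) : c (.inr (.inl (r, j))) = c (.inr (.inl (0, 0))) := by
    induction r generalizing j with
    | zero => exact base j
    | succ r ih => rw [step, ih]
  rw [← Fin.cast_val_eq_self i, along_cycle]

lemma not_dynColoring (c : Vert p → Fin (p+2)) : ¬ DynColoring (graph p) c := by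
  rintro ⟨hc, hdyn⟩
  obtain ⟨u, w, hu, hw, hne⟩ := hdyn (.inr (.inr (0, 0))) (by rw [isRegularOfDegree]; omega)
  rcases u with _ | ⟨i, j⟩ | _ <;> rcases w with _ | ⟨i', j'⟩ | _ <;>
    simp only [graph_adj, Adj] at hu hw
  subst hu hw
  exact hne ((color_connector_eq hc i 0).trans (color_connector_eq hc i' 0).symm)

end CliqueCycle

/-- For every integer n > 1 there is a regular graph G with χ(G) = n
and χ₂(G) > n. -/
theorem stmt14 (n : ℕ) (hn : 1 < n) :
    ∃ (V : Type) (_ : Fintype V) (G : SimpleGraph V) (_ : DecidableRel G.Adj) (k : ℕ),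
      G.IsRegularOfDegree k ∧ chi G = n ∧ n < dynChi G := by
  obtain ⟨p, rfl⟩ : ∃ p, n = p + 2 := ⟨n - 2, by omega⟩
  exact ⟨CliqueCycle.Vert p, inferInstance, CliqueCycle.graph p, inferInstance, 3*p+4,
    CliqueCycle.isRegularOfDegree, CliqueCycle.chi_graph,
    lt_dynChi_of_forall_not_dynColoring CliqueCycle.not_dynColoring⟩
end

section
/- If G is a graph, f is a proper coloring of G, and S is the set of 'bad' vertices of f (vertices of degree at least 2 whose neighborhood is monochromatic under f), and if f' is obtained from f by recoloring, for each w ∈ S, one chosen neighbor x(w) with a distinct new color not used by f (distinct new colors for distinct chosen vertices), then f' is a dynamic coloring of G using at most χ(G) + |S| additional colors beyond those of f. -/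
open SimpleGraph Finset

/-
Recoloring each vertex of a set `T` with a color of its own keeps the coloring proper and can only
separate colors. A vertex outside the bad set already sees two colors; a bad vertex `w` has a
neighbor in `T` (namely `x w`), whose fresh color differs from that of any other neighbor, which
exists since `deg w ≥ 2`. Each vertex of `T` contributes at most one new color, and `|T| ≤ |S|`.
-/

def recolorFresh {V α : Type*} [DecidableEq V] (T : Finset V) (f : V → α) : V → α ⊕ V :=
  fun v => if v ∈ T then .inr v else .inl (f v)

section recolorFresh

variable {V α : Type*} [DecidableEq V] (T : Finset V) {f : V → α}

theorem recolorFresh_ne_of_ne {u w : V} (h : f u ≠ f w) : recolorFresh T f u ≠ recolorFresh T f w := by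
  have huw : u ≠ w := fun huw => h (huw ▸ rfl)
  unfold recolorFresh
  split_ifs <;> simp [h, huw]

theorem recolorFresh_ne_of_mem {u w : V} (hu : u ∈ T) (huw : u ≠ w) :
    recolorFresh T f u ≠ recolorFresh T f w := by
  unfold recolorFresh
  split_ifs <;> simp [huw]

theorem ProperColoring.recolorFresh {G : SimpleGraph V} (hf : ProperColoring G f) :
    ProperColoring G (recolorFresh T f) :=
  fun _ _ huv => recolorFresh_ne_of_ne T (hf huv)

theorem DynColoring.recolorFresh [Fintype V] {G : SimpleGraph V} [DecidableRel G.Adj]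
    (hf : ProperColoring G f)
    (hT : ∀ v, 2 ≤ G.degree v → (∀ u u', G.Adj v u → G.Adj v u' → f u = f u') →
      ∃ t ∈ T, G.Adj v t) :
    DynColoring G (recolorFresh T f) := by
  refine ⟨hf.recolorFresh T, fun v hv => ?_⟩
  by_cases hbad : ∀ u u', G.Adj v u → G.Adj v u' → f u = f u'
  · obtain ⟨t, htT, hvt⟩ := hT v hv hbad
    have hcard : 1 < (G.neighborFinset v).card := by rwa [card_neighborFinset_eq_degree]
    obtain ⟨u, hu, hut⟩ := exists_mem_ne hcard t
    exact ⟨t, u, hvt, (mem_neighborFinset G v u).mp hu, recolorFresh_ne_of_mem T htT hut.symm⟩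
  · push Not at hbad
    obtain ⟨u, u', hvu, hvu', hne⟩ := hbad
    exact ⟨u, u', hvu, hvu', recolorFresh_ne_of_ne T hne⟩

theorem card_image_recolorFresh_le [DecidableEq α] (s : Finset V) :
    (s.image (recolorFresh T f)).card ≤ (s.image f).card + T.card := by
  rw [← card_disjSum]
  refine card_le_card fun c hc => ?_
  obtain ⟨v, hv, rfl⟩ := mem_image.mp hc
  unfold recolorFresh
  split_ifs with hvT
  · exact inr_mem_disjSum.mpr hvT
  · exact inl_mem_disjSum.mpr (mem_image_of_mem f hv)

end recolorFresh

/-- Let f be a proper coloring of G, S the set of its bad vertices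
(degree ≥ 2 and monochromatic neighborhood), and for each w ∈ S pick a neighbor x w.
Recoloring each chosen vertex with its own brand-new color yields a dynamic coloring
using at most |S| colors more than f. -/
theorem stmt18 {V α : Type*} [Fintype V] [DecidableEq V] [DecidableEq α]
    (G : SimpleGraph V) [DecidableRel G.Adj]
    (f : V → α) (hf : ProperColoring G f)
    (S : Finset V)
    (hS : ∀ w : V, w ∈ S ↔ 2 ≤ G.degree w ∧ ∀ u u', G.Adj w u → G.Adj w u' → f u = f u')
    (x : V → V) (hx : ∀ w ∈ S, G.Adj w (x w))
    (f' : V → α ⊕ V)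
    (hf' : ∀ v : V, f' v = if v ∈ S.image x then Sum.inr v else Sum.inl (f v)) :
    DynColoring G f' ∧
      (Finset.univ.image f').card ≤ (Finset.univ.image f).card + S.card := by
  obtain rfl : f' = recolorFresh (S.image x) f := funext hf'
  have hbad : ∀ w, 2 ≤ G.degree w → (∀ u u', G.Adj w u → G.Adj w u' → f u = f u') →
      ∃ t ∈ S.image x, G.Adj w t := fun w hw hmono =>
    have hwS := (hS w).mpr ⟨hw, hmono⟩
    ⟨x w, mem_image_of_mem x hwS, hx w hwS⟩
  exact ⟨DynColoring.recolorFresh _ hf hbad,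
    (card_image_recolorFresh_le _ _).trans (Nat.add_le_add_left card_image_le _)⟩
end
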